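/- Let B = {ψᵢ¹ ⊗ ⋯ ⊗ ψᵢⁿ : i = 1…d} and C = {φⱼ¹ ⊗ ⋯ ⊗ φⱼⁿ : j = 1…d} be two orthonormal product bases of ℂ^{d₁} ⊗ ⋯ ⊗ ℂ^{d_n}, d = d₁⋯d_n, which are mutually unbiased (|⟨ψᵢ¹ ⊗ ⋯ ⊗ ψᵢⁿ, φⱼ¹ ⊗ ⋯ ⊗ φⱼⁿ⟩|² = 1/d for all i, j). Then for every r = 1…n and all i, j = 1…d, the factor vectors satisfy |⟨ψᵢʳ, φⱼʳ⟩|² = 1/d_r. -/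

import Mathlib

/-!
Fix `i` and `r` and put `a j = d_r |⟨ψᵢʳ, φⱼʳ⟩|²` and `b j = ∏_{s ≠ r} d_s |⟨ψᵢˢ, φⱼˢ⟩|²`, so that
`a j * b j = d |⟨Ψᵢ, Φⱼ⟩|² = 1` for the product vectors `Ψᵢ`, `Φⱼ`. For any set `T` of factors,
expand in the basis `{Φⱼ}` (Parseval) the product vectors that agree with `ψᵢ` on `T` and run
through the standard basis on the other factors; summing over the standard basis vectors gives
`∑ⱼ ∏_{s ∈ T} d_s |⟨ψᵢˢ, φⱼˢ⟩|² = d`. Taking `T = {r}` and its complement, `∑ a = ∑ b = d`.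
By AM-GM `a j + b j ≥ 2` with equality only when `a j = 1`, and there are `d` indices `j`, so
every `a j = 1`.
-/

open scoped ComplexInnerProductSpace

/-- The tensor product `ψ¹ ⊗ ⋯ ⊗ ψⁿ` of `n` vectors, realized concretely on
`EuclideanSpace`: its component at the multi-index `f` is `∏ r, ψ r (f r)`. -/
noncomputable def eprodPi {n : ℕ} {D : Fin n → ℕ}
    (ψ : (r : Fin n) → EuclideanSpace ℂ (Fin (D r))) :
    EuclideanSpace ℂ ((r : Fin n) → Fin (D r)) :=
  WithLp.toLp 2 (fun f => ∏ r, ψ r (f r))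

open Finset Module

theorem Orthonormal.sum_sq_norm_inner_left_of_card_eq_finrank {𝕜 E ι : Type*} [RCLike 𝕜]
    [NormedAddCommGroup E] [InnerProductSpace 𝕜 E] [FiniteDimensional 𝕜 E] [Fintype ι]
    {v : ι → E} (hv : Orthonormal 𝕜 v) (hcard : Fintype.card ι = finrank 𝕜 E) (x : E) :
    ∑ i, ‖inner 𝕜 x (v i)‖ ^ 2 = ‖x‖ ^ 2 := by
  simpa using (OrthonormalBasis.mk hv
    (hv.linearIndependent.span_eq_top_of_card_eq_finrank' hcard).ge).sum_sq_norm_inner_left x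

theorem two_lt_add_of_mul_eq_one {a b : ℝ} (ha : 0 ≤ a) (hab : a * b = 1) (h : a ≠ 1) :
    2 < a + b := by
  have ha' : 0 < a := ha.lt_of_ne (by rintro rfl; simp at hab)
  nlinarith [sq_pos_of_ne_zero (sub_ne_zero.mpr h)]

theorem two_le_add_of_mul_eq_one {a b : ℝ} (ha : 0 ≤ a) (hab : a * b = 1) : 2 ≤ a + b := by
  rcases eq_or_ne a 1 with rfl | h
  · linarith [one_mul b ▸ hab]
  · exact (two_lt_add_of_mul_eq_one ha hab h).le

theorem eq_one_of_mul_eq_one_of_sum_add_le {ι : Type*} [Fintype ι] {a b : ι → ℝ}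
    (ha : ∀ j, 0 ≤ a j) (hab : ∀ j, a j * b j = 1)
    (hsum : ∑ j, (a j + b j) ≤ 2 * Fintype.card ι) (j : ι) : a j = 1 := by
  by_contra hj
  have : ∑ _j : ι, (2 : ℝ) < ∑ j, (a j + b j) :=
    sum_lt_sum (fun k _ => two_le_add_of_mul_eq_one (ha k) (hab k))
      ⟨j, mem_univ j, two_lt_add_of_mul_eq_one (ha j) (hab j) hj⟩
  simp only [sum_const, card_univ, nsmul_eq_mul] at this
  linarith

section eprodPi

variable {n : ℕ} {D : Fin n → ℕ}

theorem inner_eprodPi (ψ χ : (r : Fin n) → EuclideanSpace ℂ (Fin (D r))) :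
    ⟪eprodPi ψ, eprodPi χ⟫ = ∏ r, ⟪ψ r, χ r⟫ := by
  simp only [eprodPi, PiLp.inner_apply, RCLike.inner_apply, map_prod, ← prod_mul_distrib]
  rw [Fintype.prod_sum]

theorem norm_sq_inner_eprodPi (ψ χ : (r : Fin n) → EuclideanSpace ℂ (Fin (D r))) :
    ‖⟪eprodPi ψ, eprodPi χ⟫‖ ^ 2 = ∏ r, ‖⟪ψ r, χ r⟫‖ ^ 2 := by
  rw [inner_eprodPi, norm_prod, prod_pow]

theorem norm_sq_eprodPi (χ : (r : Fin n) → EuclideanSpace ℂ (Fin (D r))) :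
    ‖eprodPi χ‖ ^ 2 = ∏ r, ‖χ r‖ ^ 2 := by
  simpa only [norm_prod, inner_self_eq_norm_sq_to_K, norm_pow, RCLike.norm_ofReal, abs_norm]
    using congrArg norm (inner_eprodPi χ χ)

theorem sum_prod_mul_norm_sq_inner_of_orthonormal_eprodPi {ι : Type*} [Fintype ι]
    {φ : ι → (r : Fin n) → EuclideanSpace ℂ (Fin (D r))} (hφ : ∀ j r, ‖φ j r‖ = 1)
    (hB : Orthonormal ℂ (fun j => eprodPi (φ j))) (hcard : Fintype.card ι = ∏ r, D r)
    (T : Finset (Fin n)) (χ : (r : Fin n) → EuclideanSpace ℂ (Fin (D r))) :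
    ∑ j, ∏ r ∈ T, (D r * ‖⟪χ r, φ j r⟫‖ ^ 2) = (∏ r, D r) * ∏ r ∈ T, ‖χ r‖ ^ 2 := by
  classical
  let w : ((r : Fin n) → Fin (D r)) → (r : Fin n) → EuclideanSpace ℂ (Fin (D r)) :=
    fun g r => if r ∈ T then χ r else EuclideanSpace.single (g r) 1
  have hparseval (g) : ∑ j, ‖⟪eprodPi (w g), eprodPi (φ j)⟫‖ ^ 2 = ∏ r ∈ T, ‖χ r‖ ^ 2 := by
    rw [hB.sum_sq_norm_inner_left_of_card_eq_finrank (by simp [hcard, Fintype.card_pi]),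
      norm_sq_eprodPi]
    simp [w, apply_ite (fun v => ‖v‖ ^ 2), prod_ite_mem]
  have hslice (j) : ∑ g, ‖⟪eprodPi (w g), eprodPi (φ j)⟫‖ ^ 2
      = ∏ r ∈ T, (D r * ‖⟪χ r, φ j r⟫‖ ^ 2) := by
    rw [← univ_inter T, ← prod_ite_mem]
    simp only [norm_sq_inner_eprodPi, w]
    rw [← Fintype.prod_sum (fun r k =>
      ‖⟪if r ∈ T then χ r else EuclideanSpace.single k 1, φ j r⟫‖ ^ 2)]
    refine prod_congr rfl fun r _ => ?_
    split_ifs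
    · simp
    · simp [EuclideanSpace.inner_single_left, ← EuclideanSpace.norm_sq_eq, hφ]
  calc ∑ j, ∏ r ∈ T, (D r * ‖⟪χ r, φ j r⟫‖ ^ 2)
      = ∑ g, ∑ j, ‖⟪eprodPi (w g), eprodPi (φ j)⟫‖ ^ 2 := by
        rw [sum_comm]; exact sum_congr rfl fun j _ => (hslice j).symm
    _ = (∏ r, D r) * ∏ r ∈ T, ‖χ r‖ ^ 2 := by
        simp [hparseval, Fintype.card_pi]

end eprodPi

theorem MU_product_bases_factorwise_MU {n : ℕ} {D : Fin n → ℕ}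
    (ψ φ : Fin (∏ r, D r) → (r : Fin n) → EuclideanSpace ℂ (Fin (D r)))
    (hψ : ∀ i r, ‖ψ i r‖ = 1) (hφ : ∀ j r, ‖φ j r‖ = 1)
    (hBφ : Orthonormal ℂ (fun j => eprodPi (φ j)))
    (hMU : ∀ i j, ‖⟪eprodPi (ψ i), eprodPi (φ j)⟫‖ ^ 2 = 1 / ((∏ r, D r : ℕ) : ℝ)) :
    ∀ r i j, ‖⟪ψ i r, φ j r⟫‖ ^ 2 = 1 / (D r : ℝ) := by
  intro r i j
  have hd : ((∏ s, D s : ℕ) : ℝ) ≠ 0 := by exact_mod_cast i.pos.ne'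
  have hsum (T : Finset (Fin n)) :
      ∑ j, ∏ s ∈ T, (D s * ‖⟪ψ i s, φ j s⟫‖ ^ 2) = ((∏ s, D s : ℕ) : ℝ) := by
    simpa [hψ] using sum_prod_mul_norm_sq_inner_of_orthonormal_eprodPi hφ hBφ
      (Fintype.card_fin _) T (ψ i)
  have hsum_r : ∑ j, (D r : ℝ) * ‖⟪ψ i r, φ j r⟫‖ ^ 2 = ((∏ s, D s : ℕ) : ℝ) := by
    simpa using hsum {r}
  have hmul (j) : ((D r : ℝ) * ‖⟪ψ i r, φ j r⟫‖ ^ 2) *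
      ∏ s ∈ univ.erase r, ((D s : ℝ) * ‖⟪ψ i s, φ j s⟫‖ ^ 2) = 1 := by
    rw [mul_prod_erase univ (fun s => (D s : ℝ) * ‖⟪ψ i s, φ j s⟫‖ ^ 2) (mem_univ r),
      prod_mul_distrib, ← norm_sq_inner_eprodPi, hMU, ← Nat.cast_prod, mul_one_div_cancel hd]
  refine eq_one_div_of_mul_eq_one_right
    (eq_one_of_mul_eq_one_of_sum_add_le (fun _ => by positivity) hmul ?_ j)
  rw [sum_add_distrib, hsum_r, hsum, Fintype.card_fin]
  linarith
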